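/- arXiv:2012.10969 — 3 statements merged into one kernel-verified Lean document; each statement's English description precedes it below -/
import Mathlib

section
/- For a graph G without isolated vertices and any eigenvalue λ of G, every vertex of G belongs to the vertex set of some λ-star complement, i.e., for every v ∈ V(G) there exists a λ-star set X of G with v ∉ X. -/
open Matrix

noncomputable def eigSpace {m : Type*} [Fintype m] [DecidableEq m]
    (A : Matrix m m ℝ) (lam : ℝ) : Submodule ℝ (m → ℝ) :=
  LinearMap.ker (Matrix.mulVecLin (A - lam • (1 : Matrix m m ℝ)))

/-- `lam` is an eigenvalue of the real matrix `A`. -/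
def IsEig {m : Type*} [Fintype m] [DecidableEq m] (A : Matrix m m ℝ) (lam : ℝ) : Prop :=
  eigSpace A lam ≠ ⊥

/-- The multiplicity of `lam` as an eigenvalue of `A`. -/
noncomputable def multE {m : Type*} [Fintype m] [DecidableEq m]
    (A : Matrix m m ℝ) (lam : ℝ) : ℕ :=
  Module.finrank ℝ (eigSpace A lam)

/-- `lam` is a main eigenvalue of `A`: its eigenspace is not orthogonal to the all-ones
vector. -/
def IsMainEig {m : Type*} [Fintype m] [DecidableEq m] (A : Matrix m m ℝ) (lam : ℝ) : Prop :=
  ∃ x ∈ eigSpace A lam, ∑ i, x i ≠ 0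

/-- The adjacency matrix of the subgraph of `G` induced by the vertex set `S`. -/
def indMatrix {n : ℕ} (G : SimpleGraph (Fin n)) [DecidableRel G.Adj] (S : Finset (Fin n)) :
    Matrix S S ℝ :=
  (G.adjMatrix ℝ).submatrix (fun i => (i : Fin n)) (fun j => (j : Fin n))

/-- `X` is a `lam`-star set of `G`: its cardinality equals the multiplicity of `lam`
and `lam` is not an eigenvalue of the subgraph induced by the complement of `X`. -/
def IsStarSet {n : ℕ} (G : SimpleGraph (Fin n)) [DecidableRel G.Adj] (lam : ℝ)
    (X : Finset (Fin n)) : Prop :=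
  X.card = multE (G.adjMatrix ℝ) lam ∧ ¬ IsEig (indMatrix G Xᶜ) lam

/-- The block `N` of the adjacency matrix: rows indexed by `Xᶜ`, columns by `X`. -/
def Nmat {n : ℕ} (G : SimpleGraph (Fin n)) [DecidableRel G.Adj] (X : Finset (Fin n)) :
    Matrix ↥(Xᶜ) ↥X ℝ :=
  (G.adjMatrix ℝ).submatrix (fun i => (i : Fin n)) (fun j => (j : Fin n))

/-- The block `C` of the adjacency matrix: the adjacency matrix of `G - X`. -/
def Cmat {n : ℕ} (G : SimpleGraph (Fin n)) [DecidableRel G.Adj] (X : Finset (Fin n)) :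
    Matrix ↥(Xᶜ) ↥(Xᶜ) ℝ :=
  indMatrix G Xᶜ

/-!
Let `M = A - λ I` and `E = ker M`. A neighbour `u` of `v` gives `M u v = 1`, so no nonzero vector
of `E` vanishes off `v`: the coordinate functionals indexed by `V ∖ {v}` span the dual of `E`, and a
basis among them is a set `X ∌ v` with `|X| = dim E` such that restriction `E → ℝ^X` is bijective.
Such an `X` is a star set. If `M_{X̄X̄} y = 0`, extend `y` by zero to `x`; then `z = M x` is
supported on `X` and, `M` being symmetric, orthogonal to `E`. Choosing `w ∈ E` with `w = z` on `X`
gives `∑_{i ∈ X} z i ^ 2 = z ⬝ w = 0`, so `z = 0`; hence `x ∈ E` vanishes on `X`, and `x = 0`.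
-/

open Module

def Submodule.IsDeterminedOn {K ι : Type*} [Semiring K] (E : Submodule K (ι → K)) (S : Set ι) :
    Prop :=
  ∀ x ∈ E, (∀ i ∈ S, x i = 0) → x = 0

variable {K ι : Type*} [Fintype ι]

namespace Submodule.IsDeterminedOn

theorem exists_subset_card_eq_finrank [Field K] {E : Submodule K (ι → K)} {S : Set ι}
    (hS : E.IsDeterminedOn S) :
    ∃ X : Finset ι, ↑X ⊆ S ∧ X.card = finrank K E ∧ E.IsDeterminedOn X := by
  classical
  let f : S → Dual K E := fun i => (LinearMap.proj (i : ι)).comp E.subtype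
  have hspan : span K (Set.range f) = ⊤ := by
    refine span_eq_top_of_ne_zero fun x hx => ?_
    by_contra! h
    exact hx (Subtype.ext (hS x x.2 fun i hi => h _ ⟨⟨i, hi⟩, rfl⟩))
  obtain ⟨κ, a, ha, hspan_a, hli⟩ := exists_linearIndependent' K f
  let b : Basis κ K (Dual K E) := .mk hli (by rw [hspan_a, hspan])
  have : Fintype κ := FiniteDimensional.fintypeBasisIndex b
  refine ⟨Finset.univ.image fun k => (a k : ι), by simp [Set.range_subset_iff], ?_, ?_⟩
  · rw [Finset.card_image_of_injective _ fun _ _ h => ha (Subtype.val_injective h),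
      Finset.card_univ, ← finrank_eq_card_basis b, Subspace.dual_finrank_eq]
  · intro x hx hX
    have hb : Dual.eval K E ⟨x, hx⟩ = 0 := b.ext fun k => by
      simpa [b, f] using hX _ (Finset.mem_image_of_mem _ (Finset.mem_univ k))
    simpa using (forall_dual_apply_eq_zero_iff K (⟨x, hx⟩ : E)).mp (LinearMap.congr_fun hb)

theorem eq_zero_of_forall_dotProduct_eq_zero [Field K] [LinearOrder K] [IsStrictOrderedRing K]
    {E : Submodule K (ι → K)} {X : Finset ι} (hX : E.IsDeterminedOn X)
    (hcard : X.card = finrank K E) {z : ι → K} (hz : ∀ i ∉ X, z i = 0)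
    (hperp : ∀ u ∈ E, z ⬝ᵥ u = 0) : z = 0 := by
  let ρ : E →ₗ[K] X → K := (LinearMap.funLeft K K ((↑) : X → ι)).comp E.subtype
  have hρ : Function.Injective ρ := by
    refine (injective_iff_map_eq_zero ρ).mpr fun u hu => Subtype.ext (hX u u.2 fun i hi => ?_)
    exact congrFun hu ⟨i, hi⟩
  have hfinrank : finrank K E = finrank K (X → K) := by simp [hcard]
  obtain ⟨u, hu⟩ := (LinearMap.injective_iff_surjective_of_finrank_eq_finrank hfinrank).mp hρ
    fun i => z i
  have hsq : ∑ i ∈ X, z i * z i = 0 := by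
    rw [← hperp u u.2, dotProduct, ← Finset.sum_subset X.subset_univ fun i _ hi => by
      rw [hz i hi, zero_mul]]
    exact Finset.sum_congr rfl fun i hi => by rw [← congrFun hu ⟨i, hi⟩]; rfl
  funext i
  by_cases hi : i ∈ X
  · exact mul_self_eq_zero.mp
      ((Finset.sum_eq_zero_iff_of_nonneg fun i _ => mul_self_nonneg (z i)).mp hsq i hi)
  · exact hz i hi

end Submodule.IsDeterminedOn

namespace Matrix

theorem mulVec_extend_val_apply [NonUnitalNonAssocSemiring K] (M : Matrix ι ι K)
    (s : Finset ι) (y : s → K) (i : s) :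
    (M *ᵥ Function.extend (↑) y 0) i = (M.submatrix (↑) (↑) *ᵥ y) i := by
  simp only [mulVec, dotProduct, submatrix_apply]
  rw [← Finset.sum_subset s.subset_univ fun j _ hj => by
    rw [Function.extend_apply' _ _ _ (by simpa using hj), Pi.zero_apply, mul_zero],
    ← Finset.sum_coe_sort s]
  simp only [Subtype.val_injective.extend_apply]

theorem IsSymm.ker_submatrix_compl_eq_bot
    [Field K] [LinearOrder K] [IsStrictOrderedRing K] [DecidableEq ι]
    {M : Matrix ι ι K} (hM : M.IsSymm) {X : Finset ι}
    (hX : (LinearMap.ker M.mulVecLin).IsDeterminedOn X)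
    (hcard : X.card = finrank K (LinearMap.ker M.mulVecLin)) :
    LinearMap.ker (M.submatrix ((↑) : ↥(Xᶜ) → ι) ((↑) : ↥(Xᶜ) → ι)).mulVecLin = ⊥ := by
  refine (Submodule.eq_bot_iff _).mpr fun y hy => ?_
  rw [LinearMap.mem_ker, mulVecLin_apply] at hy
  set x : ι → K := Function.extend ((↑) : ↥(Xᶜ) → ι) y 0
  have hxX : ∀ i ∈ X, x i = 0 := fun i hi =>
    Function.extend_apply' _ _ _ fun ⟨j, hj⟩ => Finset.mem_compl.mp (hj ▸ j.2) hi
  have hMx : ∀ i ∉ X, (M *ᵥ x) i = 0 := fun i hi => by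
    rw [show i = ((⟨i, Finset.mem_compl.mpr hi⟩ : ↥Xᶜ) : ι) from rfl, mulVec_extend_val_apply, hy]
    rfl
  have hperp : ∀ u ∈ LinearMap.ker M.mulVecLin, (M *ᵥ x) ⬝ᵥ u = 0 := fun u hu => by
    rw [LinearMap.mem_ker, mulVecLin_apply] at hu
    rw [← vecMul_transpose, hM.eq, ← dotProduct_mulVec, hu, dotProduct_zero]
  have hx : x = 0 := hX x (hX.eq_zero_of_forall_dotProduct_eq_zero hcard hMx hperp) hxX
  funext j
  rw [← Subtype.val_injective.extend_apply y 0 j]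
  exact congrFun hx j

theorem eq_zero_of_mulVec_eq_zero_of_apply_ne_zero [Ring K] [NoZeroDivisors K]
    {M : Matrix ι ι K} {u v : ι} (huv : M u v ≠ 0) {x : ι → K} (hMx : M *ᵥ x = 0)
    (hx : ∀ j ≠ v, x j = 0) : x = 0 := by
  have hxv : M u v * x v = 0 := by
    have := congrFun hMx u
    rwa [mulVec, dotProduct, Finset.sum_eq_single v (fun j _ hj => by rw [hx j hj, mul_zero])
      (by simp)] at this
  funext j
  obtain rfl | hj := eq_or_ne j v
  · exact (mul_eq_zero.mp hxv).resolve_left huv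
  · exact hx j hj

end Matrix

theorem eigSpace_indMatrix {n : ℕ} (G : SimpleGraph (Fin n)) [DecidableRel G.Adj]
    (S : Finset (Fin n)) (lam : ℝ) :
    eigSpace (indMatrix G S) lam = LinearMap.ker
      ((G.adjMatrix ℝ - lam • 1).submatrix ((↑) : S → Fin n) ((↑) : S → Fin n)).mulVecLin := by
  simp only [eigSpace, indMatrix, submatrix_sub, submatrix_smul, Pi.sub_apply, Pi.smul_apply,
    submatrix_one _ Subtype.val_injective]

theorem stmt10_general {n : ℕ} (G : SimpleGraph (Fin n)) [DecidableRel G.Adj] (lam : ℝ)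
    (hiso : ∀ v : Fin n, ∃ u, G.Adj v u) :
    ∀ v : Fin n, ∃ X : Finset (Fin n), IsStarSet G lam X ∧ v ∉ X := by
  intro v
  obtain ⟨u, hvu⟩ := hiso v
  have huv : (G.adjMatrix ℝ - lam • 1) u v ≠ 0 := by
    simp [hvu.symm, one_apply_ne hvu.ne.symm]
  have hv : (eigSpace (G.adjMatrix ℝ) lam).IsDeterminedOn {v}ᶜ := fun _ hx hxv =>
    eq_zero_of_mulVec_eq_zero_of_apply_ne_zero huv hx hxv
  obtain ⟨X, hXv, hcard, hX⟩ := hv.exists_subset_card_eq_finrank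
  refine ⟨X, ⟨hcard, ?_⟩, fun hvX => hXv hvX rfl⟩
  rw [IsEig, not_not, eigSpace_indMatrix]
  exact (G.isSymm_adjMatrix.sub (isSymm_one.smul lam)).ker_submatrix_compl_eq_bot hX hcard

theorem stmt10 {n : ℕ} (G : SimpleGraph (Fin n)) [DecidableRel G.Adj] (lam : ℝ)
    (hiso : ∀ v : Fin n, ∃ u, G.Adj v u)
    (hlam : IsEig (G.adjMatrix ℝ) lam) :
    ∀ v : Fin n, ∃ X : Finset (Fin n), IsStarSet G lam X ∧ v ∉ X :=
  stmt10_general G lam hiso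
end

section
/- A vertex v of a graph G lies in every star set corresponding to an eigenvalue μ of G if and only if μ = 0 and v is an isolated vertex of G. -/
open Matrix

/-!
A set `X` is a `μ`-star set exactly when `|X| = dim E(μ)` and no nonzero `μ`-eigenvector
vanishes on `X`. Indeed, if `z` were a `μ`-eigenvector of `G - X`, its extension `zh` by zero
gives a vector `w = (A - μ I) zh` supported on `X` and orthogonal to `E(μ)`; since restriction
to `X` maps `E(μ)` onto `ℝ^X`, `w` is orthogonal to itself, so `zh ∈ E(μ)` vanishes on `X`.

Hence `v` lies in every star set iff `e_v ∈ E(μ)`, i.e. `μ = 0` and `v` is isolated. Otherwise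
no nonzero vector of `E(μ)` is supported on `{v}`, so the coordinate functionals away from `v`
span the dual of `E(μ)`, and a basis chosen among them is a star set avoiding `v`.
-/

open Module

section Restriction

variable {ι K : Type*} [Field K]

theorem exists_mem_eqOn_of_card_eq_finrank [Finite ι] (E : Submodule K (ι → K)) {X : Finset ι}
    (hcard : X.card = finrank K E) (hX : ∀ y ∈ E, (∀ i ∈ X, y i = 0) → y = 0) (w : ι → K) :
    ∃ y ∈ E, ∀ i ∈ X, y i = w i := by
  let r : E →ₗ[K] X → K := LinearMap.pi fun i => (LinearMap.proj (i : ι)).comp E.subtype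
  have hr : Function.Injective r := by
    rw [← LinearMap.ker_eq_bot, LinearMap.ker_eq_bot']
    intro y hy
    exact Subtype.ext (hX y y.2 fun i hi => congrFun hy ⟨i, hi⟩)
  have hdim : finrank K E = finrank K (X → K) := by simp [hcard]
  obtain ⟨y, hy⟩ :=
    (LinearMap.injective_iff_surjective_of_finrank_eq_finrank hdim).mp hr fun i => w i
  exact ⟨y, y.2, fun i hi => congrFun hy ⟨i, hi⟩⟩

theorem exists_finset_subset_card_eq_finrank [Finite ι] (E : Submodule K (ι → K)) {S : Set ι}
    (hS : ∀ y ∈ E, (∀ i ∈ S, y i = 0) → y = 0) :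
    ∃ X : Finset ι, ↑X ⊆ S ∧ X.card = finrank K E ∧
      ∀ y ∈ E, (∀ i ∈ X, y i = 0) → y = 0 := by
  classical
  let L : S → Dual K E := fun i => (LinearMap.proj (i : ι)).comp E.subtype
  obtain ⟨κ, a, ha, hspan, hli⟩ := exists_linearIndependent' K L
  have : Fintype κ := @Fintype.ofFinite κ hli.finite
  have hL_top : Submodule.span K (Set.range L) = ⊤ := by
    refine eq_top_iff.mpr fun φ _ => FiniteDimensional.mem_span_of_iInf_ker_le_ker ?_
    intro y hy
    have : (y : ι → K) = 0 := hS y y.2 fun i hi => (Submodule.mem_iInf _).mp hy ⟨i, hi⟩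
    obtain rfl : y = 0 := Subtype.ext this
    exact map_zero φ
  refine ⟨Finset.univ.image fun k => (a k : ι), ?_, ?_, ?_⟩
  · simp [Set.subset_def]
  · have hinj : Function.Injective fun k => (a k : ι) := Subtype.val_injective.comp ha
    rw [Finset.card_image_of_injective _ hinj, Finset.card_univ,
      ← Subspace.dual_finrank_eq, ← finrank_span_eq_card hli, hspan, hL_top, finrank_top]
  · intro y hy h0
    have hev : Submodule.span K (Set.range L) ≤ LinearMap.ker (Dual.eval K E ⟨y, hy⟩) := by
      rw [← hspan, Submodule.span_le]
      rintro _ ⟨k, rfl⟩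
      exact h0 _ (Finset.mem_image_of_mem _ (Finset.mem_univ k))
    exact hS y hy fun i hi => hev (Submodule.subset_span ⟨⟨i, hi⟩, rfl⟩)

theorem eq_zero_of_mem_of_single_notMem [DecidableEq ι] {E : Submodule K (ι → K)} {v : ι}
    (hv : Pi.single v 1 ∉ E) {y : ι → K} (hy : y ∈ E) (h0 : ∀ i ∈ ({v}ᶜ : Set ι), y i = 0) :
    y = 0 := by
  by_contra hne
  have hyv : y v ≠ 0 := fun h => hne <| funext fun i => by
    by_cases hi : i = v
    · simp [hi, h]
    · exact h0 i hi
  have hsingle : Pi.single v 1 = (y v)⁻¹ • y := funext fun i => by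
    by_cases hi : i = v
    · simp [hi, hyv]
    · simp [hi, h0 i hi]
  exact hv (hsingle ▸ E.smul_mem _ hy)

end Restriction

section PrincipalSubmatrix

variable {m : Type*} [Fintype m] [DecidableEq m] {X : Finset m}

theorem mem_eigSpace_iff {A : Matrix m m ℝ} {μ : ℝ} {x : m → ℝ} :
    x ∈ eigSpace A μ ↔ A *ᵥ x = μ • x := by
  simp only [eigSpace, LinearMap.mem_ker, mulVecLin_apply, sub_mulVec, smul_mulVec,
    one_mulVec, sub_eq_zero]

theorem isEig_iff {A : Matrix m m ℝ} {μ : ℝ} : IsEig A μ ↔ ∃ x ≠ 0, A *ᵥ x = μ • x := by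
  simp only [IsEig, Submodule.ne_bot_iff, mem_eigSpace_iff]
  exact exists_congr fun x => and_comm

theorem submatrix_compl_mulVec_of_forall_mem_eq_zero {R : Type*} [NonUnitalNonAssocSemiring R]
    (A : Matrix m m R) {y : m → R} (hy : ∀ i ∈ X, y i = 0) :
    A.submatrix (Subtype.val : ↥Xᶜ → m) Subtype.val *ᵥ (fun j : ↥Xᶜ => y j) =
      fun i : ↥Xᶜ => (A *ᵥ y) i := by
  funext i
  simp only [mulVec, dotProduct, submatrix_apply]
  rw [Finset.sum_coe_sort Xᶜ fun j => A i j * y j]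
  refine Finset.sum_subset (Finset.subset_univ _) fun j _ hj => ?_
  rw [hy j (by simpa using hj), mul_zero]

theorem eq_zero_of_not_isEig_submatrix_compl {A : Matrix m m ℝ} {μ : ℝ}
    (hX : ¬ IsEig (A.submatrix (Subtype.val : ↥Xᶜ → m) Subtype.val) μ) {y : m → ℝ}
    (hy : y ∈ eigSpace A μ) (h0 : ∀ i ∈ X, y i = 0) : y = 0 := by
  have hrestr : (fun j : ↥Xᶜ => y j) = 0 := by
    by_contra hne
    refine hX (isEig_iff.mpr ⟨_, hne, ?_⟩)
    rw [submatrix_compl_mulVec_of_forall_mem_eq_zero A h0, mem_eigSpace_iff.mp hy]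
    rfl
  funext i
  by_cases hi : i ∈ X
  · exact h0 i hi
  · exact congrFun hrestr ⟨i, by simpa using hi⟩

theorem not_isEig_submatrix_compl {A : Matrix m m ℝ} {μ : ℝ} (hA : A.IsSymm)
    (hcard : X.card = finrank ℝ (eigSpace A μ))
    (hX : ∀ y ∈ eigSpace A μ, (∀ i ∈ X, y i = 0) → y = 0) :
    ¬ IsEig (A.submatrix (Subtype.val : ↥Xᶜ → m) Subtype.val) μ := by
  rw [isEig_iff]
  rintro ⟨z, hz0, hz⟩
  let B := A - μ • (1 : Matrix m m ℝ)
  have hB : B.IsSymm := hA.sub (isSymm_one.smul μ)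
  let zh : m → ℝ := fun i => if h : i ∈ Xᶜ then z ⟨i, h⟩ else 0
  have hzh_X : ∀ i ∈ X, zh i = 0 := fun i hi => dif_neg (by simpa using hi)
  have hzh_restr : (fun j : ↥Xᶜ => zh j) = z := funext fun j => dif_pos j.2
  let w := B *ᵥ zh
  have hw_compl : ∀ i ∉ X, w i = 0 := by
    intro i hi
    have := congrFun (submatrix_compl_mulVec_of_forall_mem_eq_zero A hzh_X) ⟨i, by simpa⟩
    rw [hzh_restr, hz] at this
    have hwi : w i = (A *ᵥ zh) i - μ * zh i := by simp [w, B, sub_mulVec, smul_mulVec]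
    rw [hwi, ← this, Pi.smul_apply, smul_eq_mul, sub_eq_zero, ← hzh_restr]
  have hw_orth : ∀ y ∈ eigSpace A μ, w ⬝ᵥ y = 0 := by
    intro y hy
    rw [dotProduct_comm, dotProduct_mulVec, ← mulVec_transpose, hB.eq,
      show B *ᵥ y = 0 from hy, zero_dotProduct]
  obtain ⟨y, hy, hyw⟩ := exists_mem_eqOn_of_card_eq_finrank _ hcard hX w
  have hw : w = 0 := by
    rw [← dotProduct_self_eq_zero, ← hw_orth y hy]
    refine Finset.sum_congr rfl fun i _ => ?_
    by_cases hi : i ∈ X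
    · rw [hyw i hi]
    · rw [hw_compl i hi, zero_mul, zero_mul]
  have hzh : zh = 0 := hX zh hw hzh_X
  apply hz0
  rw [← hzh_restr, hzh]
  rfl

end PrincipalSubmatrix

theorem isStarSet_iff {n : ℕ} (G : SimpleGraph (Fin n)) [DecidableRel G.Adj] (μ : ℝ)
    (X : Finset (Fin n)) :
    IsStarSet G μ X ↔ X.card = multE (G.adjMatrix ℝ) μ ∧
      ∀ y ∈ eigSpace (G.adjMatrix ℝ) μ, (∀ i ∈ X, y i = 0) → y = 0 :=
  and_congr_right fun hcard =>
    ⟨fun hX _ => eq_zero_of_not_isEig_submatrix_compl hX,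
      not_isEig_submatrix_compl G.isSymm_adjMatrix hcard⟩

theorem single_mem_eigSpace_adjMatrix_iff {V : Type*} [Fintype V] [DecidableEq V]
    (G : SimpleGraph V) [DecidableRel G.Adj] (μ : ℝ) (v : V) :
    Pi.single v 1 ∈ eigSpace (G.adjMatrix ℝ) μ ↔ μ = 0 ∧ ∀ u, ¬ G.Adj v u := by
  rw [mem_eigSpace_iff, mulVec_single_one]
  constructor
  · intro h
    have hμ : μ = 0 := by simpa using (congrFun h v).symm
    refine ⟨hμ, fun u hvu => ?_⟩
    simpa [hμ, hvu.symm] using congrFun h u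
  · rintro ⟨rfl, hv⟩
    funext u
    simp [G.adj_comm, hv]

theorem stmt11_general {n : ℕ} (G : SimpleGraph (Fin n)) [DecidableRel G.Adj] (mu : ℝ)
    (v : Fin n) :
    (∀ X : Finset (Fin n), IsStarSet G mu X → v ∈ X) ↔
      (mu = 0 ∧ ∀ u, ¬ G.Adj v u) := by
  simp only [isStarSet_iff, ← single_mem_eigSpace_adjMatrix_iff]
  constructor
  · intro h
    by_contra hv
    obtain ⟨X, hXv, hcard, hX⟩ := exists_finset_subset_card_eq_finrank _
      fun y hy h0 => eq_zero_of_mem_of_single_notMem hv hy h0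
    exact hXv (h X ⟨hcard, hX⟩) rfl
  · intro hv X ⟨_, hX⟩
    by_contra hvX
    refine Pi.single_ne_zero_iff.mpr one_ne_zero (hX _ hv fun i hi => ?_)
    exact Pi.single_eq_of_ne (ne_of_mem_of_not_mem hi hvX) 1

theorem stmt11 {n : ℕ} (G : SimpleGraph (Fin n)) [DecidableRel G.Adj] (mu : ℝ)
    (hmu : IsEig (G.adjMatrix ℝ) mu) (v : Fin n) :
    (∀ X : Finset (Fin n), IsStarSet G mu X → v ∈ X) ↔
      (mu = 0 ∧ ∀ u, ¬ G.Adj v u) :=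
  stmt11_general G mu v
end

section
/- Let G be a graph with m distinct eigenvalues and let X_1 ∪ ⋯ ∪ X_m be a star partition of G (each X_i a μ_i-star set). If G has no isolated vertices, then for each i, the complement X̄_i = V(G) \ X_i is a dominating set of G, i.e., every vertex of X_i has a neighbour in X̄_i. -/
open Matrix

lemma mem_eigSpace_iff_s13 {m : Type*} [Fintype m] [DecidableEq m]
    (A : Matrix m m ℝ) (lam : ℝ) (x : m → ℝ) :
    x ∈ eigSpace A lam ↔ ∀ w, ∑ u, A w u * x u = lam * x w := by
  simp only [eigSpace, LinearMap.mem_ker, Matrix.mulVecLin_apply, funext_iff,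
    Matrix.mulVec, dotProduct, Matrix.sub_apply, Matrix.smul_apply,
    Matrix.one_apply, smul_eq_mul, sub_mul, Finset.sum_sub_distrib, Pi.zero_apply,
    mul_ite, mul_one, mul_zero, ite_mul, zero_mul, Finset.sum_ite_eq, Finset.mem_univ,
    if_true, sub_eq_zero]

theorem stmt13' {n : ℕ} (G : SimpleGraph (Fin n)) [DecidableRel G.Adj]
    (hiso : ∀ v : Fin n, ∃ u, G.Adj v u) (μ : ℝ) (S : Finset (Fin n))
    (hstar : IsStarSet G μ S) :
    ∀ v ∈ S, ∃ u, u ∉ S ∧ G.Adj v u := by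
  intro v hv
  by_contra hcon
  push_neg at hcon
  set A := G.adjMatrix ℝ with hA
  -- the eigenspace of the complement-induced subgraph is trivial
  have hCbot : eigSpace (indMatrix G Sᶜ) μ = ⊥ := not_not.mp hstar.2
  -- key: a vector in eigSpace A μ vanishing on S (as a function) is zero on Sᶜ
  have hvanish : ∀ x ∈ eigSpace A μ, (∀ u ∈ S, ∀ w ∈ Sᶜ, A w u * x u = 0) →
      ∀ w ∈ Sᶜ, x w = 0 := by
    intro x hx hxS
    have hy : (fun w : ↥(Sᶜ) => x w) ∈ eigSpace (indMatrix G Sᶜ) μ := by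
      rw [mem_eigSpace_iff_s13]
      intro w
      have h1 : ∑ u : Fin n, A (w : Fin n) u * x u = μ * x w :=
        (mem_eigSpace_iff_s13 A μ x).mp hx w
      have h2 : ∑ u ∈ S, A (w : Fin n) u * x u = 0 :=
        Finset.sum_eq_zero fun u hu => hxS u hu w w.2
      have h3 : ∑ u ∈ Sᶜ, A (w : Fin n) u * x u = μ * x w := by
        have := Finset.sum_add_sum_compl S (fun u => A (w : Fin n) u * x u)
        rw [h2, zero_add] at this
        rw [this, h1]
      calc ∑ u : ↥(Sᶜ), indMatrix G Sᶜ w u * x u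
          = ∑ u ∈ Sᶜ, A (w : Fin n) u * x u := by
            rw [← Finset.sum_coe_sort (Sᶜ) (fun u => A (w : Fin n) u * x u)]
            rfl
        _ = μ * x w := h3
    have : (fun w : ↥(Sᶜ) => x w) = 0 := by
      have := hCbot ▸ hy
      simpa using this
    intro w hw
    exact congrFun this ⟨w, hw⟩
  -- the restriction map from the eigenspace to functions on S
  let f : eigSpace A μ →ₗ[ℝ] (↥S → ℝ) :=
    (LinearMap.funLeft ℝ ℝ (fun s : ↥S => (s : Fin n))).comp (eigSpace A μ).subtype
  have hinj : Function.Injective f := by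
    rw [← LinearMap.ker_eq_bot, LinearMap.ker_eq_bot']
    intro ⟨x, hx⟩ hfx
    have hxS : ∀ u ∈ S, x u = 0 := by
      intro u hu
      have := congrFun hfx ⟨u, hu⟩
      simpa [f] using this
    have hxSc : ∀ w ∈ Sᶜ, x w = 0 :=
      hvanish x hx (fun u hu w _ => by rw [hxS u hu, mul_zero])
    ext u
    by_cases h : u ∈ S
    · exact hxS u h
    · exact hxSc u (Finset.mem_compl.mpr h)
  have hdim : Module.finrank ℝ (eigSpace A μ) = Module.finrank ℝ (↥S → ℝ) := by
    rw [Module.finrank_fintype_fun_eq_card, Fintype.card_coe, hstar.1]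
    rfl
  have hsurj : Function.Surjective f :=
    (LinearMap.injective_iff_surjective_of_finrank_eq_finrank hdim).mp hinj
  -- pick the eigenvector restricting to the indicator of v on S
  obtain ⟨⟨x, hx⟩, hfx⟩ := hsurj (fun s : ↥S => if (s : Fin n) = v then 1 else 0)
  have hxS : ∀ u : Fin n, (hu : u ∈ S) → x u = if u = v then 1 else 0 := by
    intro u hu
    exact congrFun hfx ⟨u, hu⟩
  -- x vanishes on Sᶜ
  have hxSc : ∀ w ∈ Sᶜ, x w = 0 := by
    refine hvanish x hx ?_
    intro u hu w hw
    rw [hxS u hu]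
    rcases eq_or_ne u v with rfl | h
    · have h1 : ¬ G.Adj u w := fun hadj => (hcon w (Finset.mem_compl.mp hw)) hadj
      have h2 : A w u = 0 := by
        simp only [hA, SimpleGraph.adjMatrix_apply, ite_eq_right_iff]
        intro hadj
        exact absurd hadj.symm h1
      simp [h2]
    · simp [h]
  -- now take a neighbour u of v; it must lie in S
  obtain ⟨u, huv⟩ := hiso v
  have huS : u ∈ S := by
    by_contra huS
    exact hcon u huS huv
  have hune : u ≠ v := fun h => G.irrefl (h ▸ huv)
  have heq : ∑ w : Fin n, A u w * x w = μ * x u :=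
    (mem_eigSpace_iff_s13 A μ x).mp hx u
  have hxu : x u = 0 := by rw [hxS u huS]; simp [hune]
  have hS : ∑ w ∈ S, A u w * x w = 1 := by
    have : ∀ w ∈ S, A u w * x w = if w = v then A u w else 0 := by
      intro w hw
      rw [hxS w hw]
      by_cases h : w = v <;> simp [h]
    rw [Finset.sum_congr rfl this, Finset.sum_ite_eq' S v (fun w => A u w)]
    simp [hv, hA, huv.symm]
  have hSc : ∑ w ∈ Sᶜ, A u w * x w = 0 :=
    Finset.sum_eq_zero fun w hw => by rw [hxSc w hw, mul_zero]
  have := Finset.sum_add_sum_compl S (fun w => A u w * x w)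
  rw [hS, hSc, add_zero, heq, hxu, mul_zero] at this
  exact one_ne_zero this


theorem stmt13 {n m : ℕ} (G : SimpleGraph (Fin n)) [DecidableRel G.Adj]
    (hiso : ∀ v : Fin n, ∃ u, G.Adj v u)
    (mu : Fin m → ℝ) (hinj : Function.Injective mu)
    (hall : ∀ x : ℝ, IsEig (G.adjMatrix ℝ) x ↔ ∃ i, x = mu i)
    (X : Fin m → Finset (Fin n))
    (hstar : ∀ i, IsStarSet G (mu i) (X i))
    (hdisj : ∀ i j, i ≠ j → Disjoint (X i) (X j))
    (hcover : Finset.univ.biUnion X = Finset.univ) :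
    ∀ i, ∀ v ∈ X i, ∃ u, u ∉ X i ∧ G.Adj v u :=
  fun i => stmt13' G hiso (mu i) (X i) (hstar i)
end
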